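/- Let (C_k)_{k≥1} be a sequence of smooth bivariate copulas and let c_{(n)} denote the s-vine densities. Then for every n ≥ 1 and all (u_1,…,u_n) ∈ (0,1)^n, ∫_0^1 c_{(n+1)}(x,u_1,…,u_n) dx = c_{(n)}(u_1,…,u_n), with the convention c_{(1)} ≡ 1; in particular the first marginal of the s-vine density of order n+1 coincides with the s-vine density of order n. -/

import Mathlib

open MeasureTheory Set

noncomputable section

/-- A smooth bivariate copula: `C : [0,1]² → [0,1]`, `C^∞` on `[0,1]²`, with the copula
boundary conditions and a strictly positive density `c = ∂²C/∂u∂v` on `(0,1)²`. -/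
structure SmoothBivCopula where
  toFun : ℝ → ℝ → ℝ
  smooth : ContDiffOn ℝ (⊤ : ℕ∞) (fun p : ℝ × ℝ => toFun p.1 p.2)
      (Set.Icc (0:ℝ) 1 ×ˢ Set.Icc (0:ℝ) 1)
  zero_left : ∀ v ∈ Set.Icc (0:ℝ) 1, toFun 0 v = 0
  zero_right : ∀ u ∈ Set.Icc (0:ℝ) 1, toFun u 0 = 0
  one_left : ∀ v ∈ Set.Icc (0:ℝ) 1, toFun 1 v = v
  one_right : ∀ u ∈ Set.Icc (0:ℝ) 1, toFun u 1 = u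
  density_pos : ∀ u ∈ Set.Ioo (0:ℝ) 1, ∀ v ∈ Set.Ioo (0:ℝ) 1,
    0 < deriv (fun t => deriv (fun s => toFun s t) u) v

namespace SmoothBivCopula

/-- `h⁽¹⁾(u,v) = ∂C(u,v)/∂u`. -/
def h1 (C : SmoothBivCopula) (u v : ℝ) : ℝ := deriv (fun s => C.toFun s v) u

/-- `h⁽²⁾(u,v) = ∂C(u,v)/∂v`. -/
def h2 (C : SmoothBivCopula) (u v : ℝ) : ℝ := deriv (fun t => C.toFun u t) v

/-- The copula density `c(u,v) = ∂²C/(∂u∂v)`. -/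
def density (C : SmoothBivCopula) (u v : ℝ) : ℝ :=
  deriv (fun t => deriv (fun s => C.toFun s t) u) v

/-- the closed unit square -/
def sq : Set (ℝ × ℝ) := Set.Icc (0:ℝ) 1 ×ˢ Set.Icc (0:ℝ) 1

lemma uniqueDiffOn_sq : UniqueDiffOn ℝ sq :=
  (uniqueDiffOn_Icc one_pos).prod (uniqueDiffOn_Icc one_pos)

lemma interior_sq : interior sq = Set.Ioo (0:ℝ) 1 ×ˢ Set.Ioo (0:ℝ) 1 := by
  rw [sq, interior_prod_eq, interior_Icc]

def F (C : SmoothBivCopula) : ℝ × ℝ → ℝ := fun p => C.toFun p.1 p.2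

def H1 (C : SmoothBivCopula) (p : ℝ × ℝ) : ℝ := fderivWithin ℝ C.F sq p (1, 0)
def H2 (C : SmoothBivCopula) (p : ℝ × ℝ) : ℝ := fderivWithin ℝ C.F sq p (0, 1)

variable (C : SmoothBivCopula)

lemma smoothF : ContDiffOn ℝ (⊤ : ℕ∞) C.F sq := C.smooth

lemma continuousOn_H1 : ContinuousOn C.H1 sq := by
  have h := C.smoothF.continuousOn_fderivWithin uniqueDiffOn_sq (by exact_mod_cast le_top)
  exact (ContinuousLinearMap.apply ℝ ℝ ((1:ℝ), (0:ℝ))).continuous.comp_continuousOn h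

lemma continuousOn_H2 : ContinuousOn C.H2 sq := by
  have h := C.smoothF.continuousOn_fderivWithin uniqueDiffOn_sq (by exact_mod_cast le_top)
  exact (ContinuousLinearMap.apply ℝ ℝ ((0:ℝ), (1:ℝ))).continuous.comp_continuousOn h

lemma mem_interior_sq {a b : ℝ} (ha : a ∈ Set.Ioo (0:ℝ) 1) (hb : b ∈ Set.Ioo (0:ℝ) 1) :
    ((a, b) : ℝ × ℝ) ∈ interior sq := by
  rw [interior_sq]; exact ⟨ha, hb⟩

lemma sq_mem_nhds {a b : ℝ} (ha : a ∈ Set.Ioo (0:ℝ) 1) (hb : b ∈ Set.Ioo (0:ℝ) 1) :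
    sq ∈ nhds ((a, b) : ℝ × ℝ) :=
  mem_nhds_iff.2 ⟨interior sq, interior_subset, isOpen_interior, mem_interior_sq ha hb⟩

lemma hasFDerivAt_F {a b : ℝ} (ha : a ∈ Set.Ioo (0:ℝ) 1) (hb : b ∈ Set.Ioo (0:ℝ) 1) :
    HasFDerivAt C.F (fderiv ℝ C.F (a, b)) ((a, b) : ℝ × ℝ) :=
  (((C.smoothF.contDiffAt (sq_mem_nhds ha hb)).differentiableAt (by simp))).hasFDerivAt

lemma hasDerivAt_snd {a b : ℝ} (ha : a ∈ Set.Ioo (0:ℝ) 1) (hb : b ∈ Set.Ioo (0:ℝ) 1) :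
    HasDerivAt (fun t => C.toFun a t) (fderiv ℝ C.F (a, b) (0, 1)) b := by
  have hl : HasDerivAt (fun t => ((a, t) : ℝ × ℝ)) (0, 1) b :=
    (hasDerivAt_const b a).prodMk (hasDerivAt_id b)
  exact (C.hasFDerivAt_F ha hb).comp_hasDerivAt b hl

lemma hasDerivAt_fst {a b : ℝ} (ha : a ∈ Set.Ioo (0:ℝ) 1) (hb : b ∈ Set.Ioo (0:ℝ) 1) :
    HasDerivAt (fun s => C.toFun s b) (fderiv ℝ C.F (a, b) (1, 0)) a := by
  have hl : HasDerivAt (fun s => ((s, b) : ℝ × ℝ)) (1, 0) a :=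
    (hasDerivAt_id a).prodMk (hasDerivAt_const a b)
  exact (C.hasFDerivAt_F ha hb).comp_hasDerivAt a hl

lemma h2_eq_fderiv {a b : ℝ} (ha : a ∈ Set.Ioo (0:ℝ) 1) (hb : b ∈ Set.Ioo (0:ℝ) 1) :
    C.h2 a b = fderiv ℝ C.F (a, b) (0, 1) := (C.hasDerivAt_snd ha hb).deriv

lemma h1_eq_fderiv {a b : ℝ} (ha : a ∈ Set.Ioo (0:ℝ) 1) (hb : b ∈ Set.Ioo (0:ℝ) 1) :
    C.h1 a b = fderiv ℝ C.F (a, b) (1, 0) := (C.hasDerivAt_fst ha hb).deriv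

lemma fderivWithin_eq_fderiv_int {a b : ℝ} (ha : a ∈ Set.Ioo (0:ℝ) 1)
    (hb : b ∈ Set.Ioo (0:ℝ) 1) :
    fderivWithin ℝ C.F sq ((a, b) : ℝ × ℝ) = fderiv ℝ C.F (a, b) :=
  fderivWithin_of_mem_nhds (sq_mem_nhds ha hb)

lemma H2_eq_h2 {a b : ℝ} (ha : a ∈ Set.Ioo (0:ℝ) 1) (hb : b ∈ Set.Ioo (0:ℝ) 1) :
    C.H2 (a, b) = C.h2 a b := by
  rw [H2, fderivWithin_eq_fderiv_int C ha hb, h2_eq_fderiv C ha hb]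

lemma H1_eq_h1 {a b : ℝ} (ha : a ∈ Set.Ioo (0:ℝ) 1) (hb : b ∈ Set.Ioo (0:ℝ) 1) :
    C.H1 (a, b) = C.h1 a b := by
  rw [H1, fderivWithin_eq_fderiv_int C ha hb, h1_eq_fderiv C ha hb]



lemma hasFDerivWithinAt_F {p : ℝ × ℝ} (hp : p ∈ sq) :
    HasFDerivWithinAt C.F (fderivWithin ℝ C.F sq p) sq p :=
  ((C.smoothF.differentiableOn (by simp)) p hp).hasFDerivWithinAt

private lemma deriv_unique_within {s : Set ℝ} {x d d' : ℝ} {φ : ℝ → ℝ}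
    (hu : UniqueDiffWithinAt ℝ s x) (h : HasDerivWithinAt φ d s x)
    (h' : HasDerivWithinAt φ d' s x) : d = d' := by
  have := hu.eq h.hasFDerivWithinAt h'.hasFDerivWithinAt
  simpa using congrFun (congrArg (fun L => (ContinuousLinearMap.toLinearMap L).toFun) this) 1

/-- value of H2 on the left edge -/
lemma H2_left {b : ℝ} (hb : b ∈ Set.Icc (0:ℝ) 1) : C.H2 (0, b) = 0 := by
  have hp : ((0:ℝ), b) ∈ sq := ⟨Set.left_mem_Icc.2 zero_le_one, hb⟩
  have hline : HasDerivWithinAt (fun t => (((0:ℝ), t) : ℝ × ℝ)) ((0:ℝ), (1:ℝ))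
      (Set.Icc 0 1) b := ((hasDerivAt_const b (0:ℝ)).prodMk (hasDerivAt_id b)).hasDerivWithinAt
  have hmaps : Set.MapsTo (fun t => (((0:ℝ), t) : ℝ × ℝ)) (Set.Icc 0 1) sq :=
    fun t ht => ⟨Set.left_mem_Icc.2 zero_le_one, ht⟩
  have hcomp : HasDerivWithinAt (fun t => C.F (0, t)) (C.H2 (0, b)) (Set.Icc 0 1) b :=
    (C.hasFDerivWithinAt_F hp).comp_hasDerivWithinAt b hline hmaps
  have hzero : HasDerivWithinAt (fun t => C.F (0, t)) 0 (Set.Icc 0 1) b := by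
    refine (hasDerivWithinAt_const b _ (0:ℝ)).congr (fun t ht => C.zero_left t ht)
      (C.zero_left b hb)
  exact deriv_unique_within ((uniqueDiffOn_Icc one_pos) b hb) hcomp hzero

lemma H2_right {b : ℝ} (hb : b ∈ Set.Icc (0:ℝ) 1) : C.H2 (1, b) = 1 := by
  have hp : ((1:ℝ), b) ∈ sq := ⟨Set.right_mem_Icc.2 zero_le_one, hb⟩
  have hline : HasDerivWithinAt (fun t => (((1:ℝ), t) : ℝ × ℝ)) ((0:ℝ), (1:ℝ))
      (Set.Icc 0 1) b := ((hasDerivAt_const b (1:ℝ)).prodMk (hasDerivAt_id b)).hasDerivWithinAt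
  have hmaps : Set.MapsTo (fun t => (((1:ℝ), t) : ℝ × ℝ)) (Set.Icc 0 1) sq :=
    fun t ht => ⟨Set.right_mem_Icc.2 zero_le_one, ht⟩
  have hcomp : HasDerivWithinAt (fun t => C.F (1, t)) (C.H2 (1, b)) (Set.Icc 0 1) b :=
    (C.hasFDerivWithinAt_F hp).comp_hasDerivWithinAt b hline hmaps
  have hid : HasDerivWithinAt (fun t => C.F (1, t)) 1 (Set.Icc 0 1) b := by
    refine (hasDerivWithinAt_id b _).congr (fun t ht => C.one_left t ht) (C.one_left b hb)
  exact deriv_unique_within ((uniqueDiffOn_Icc one_pos) b hb) hcomp hid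

lemma H1_bot {a : ℝ} (ha : a ∈ Set.Icc (0:ℝ) 1) : C.H1 (a, 0) = 0 := by
  have hp : (a, (0:ℝ)) ∈ sq := ⟨ha, Set.left_mem_Icc.2 zero_le_one⟩
  have hline : HasDerivWithinAt (fun s => ((s, (0:ℝ)) : ℝ × ℝ)) ((1:ℝ), (0:ℝ))
      (Set.Icc 0 1) a := ((hasDerivAt_id a).prodMk (hasDerivAt_const a (0:ℝ))).hasDerivWithinAt
  have hmaps : Set.MapsTo (fun s => ((s, (0:ℝ)) : ℝ × ℝ)) (Set.Icc 0 1) sq :=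
    fun s hs => ⟨hs, Set.left_mem_Icc.2 zero_le_one⟩
  have hcomp : HasDerivWithinAt (fun s => C.F (s, 0)) (C.H1 (a, 0)) (Set.Icc 0 1) a :=
    by have := (C.hasFDerivWithinAt_F hp).comp_hasDerivWithinAt a hline hmaps; exact this
  have hzero : HasDerivWithinAt (fun s => C.F (s, 0)) 0 (Set.Icc 0 1) a := by
    refine (hasDerivWithinAt_const a _ (0:ℝ)).congr (fun s hs => C.zero_right s hs)
      (C.zero_right a ha)
  exact deriv_unique_within ((uniqueDiffOn_Icc one_pos) a ha) hcomp hzero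

lemma H1_top {a : ℝ} (ha : a ∈ Set.Icc (0:ℝ) 1) : C.H1 (a, 1) = 1 := by
  have hp : (a, (1:ℝ)) ∈ sq := ⟨ha, Set.right_mem_Icc.2 zero_le_one⟩
  have hline : HasDerivWithinAt (fun s => ((s, (1:ℝ)) : ℝ × ℝ)) ((1:ℝ), (0:ℝ))
      (Set.Icc 0 1) a := ((hasDerivAt_id a).prodMk (hasDerivAt_const a (1:ℝ))).hasDerivWithinAt
  have hmaps : Set.MapsTo (fun s => ((s, (1:ℝ)) : ℝ × ℝ)) (Set.Icc 0 1) sq :=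
    fun s hs => ⟨hs, Set.right_mem_Icc.2 zero_le_one⟩
  have hcomp : HasDerivWithinAt (fun s => C.F (s, 1)) (C.H1 (a, 1)) (Set.Icc 0 1) a :=
    by have := (C.hasFDerivWithinAt_F hp).comp_hasDerivWithinAt a hline hmaps; exact this
  have hid : HasDerivWithinAt (fun s => C.F (s, 1)) 1 (Set.Icc 0 1) a := by
    refine (hasDerivWithinAt_id a _).congr (fun s hs => C.one_right s hs) (C.one_right a ha)
  exact deriv_unique_within ((uniqueDiffOn_Icc one_pos) a ha) hcomp hid


/-- Second derivative data at an interior point. -/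
lemma mixed_partials {a b : ℝ} (ha : a ∈ Set.Ioo (0:ℝ) 1) (hb : b ∈ Set.Ioo (0:ℝ) 1) :
    HasDerivAt (fun s => C.h2 s b) (C.density a b) a ∧
    HasDerivAt (fun t => C.h1 a t) (C.density a b) b := by
  set p : ℝ × ℝ := (a, b) with hpdef
  have hmem : sq ∈ nhds p := sq_mem_nhds ha hb
  have hCtop : ContDiffAt ℝ (⊤:ℕ∞) C.F p := C.smoothF.contDiffAt hmem
  have hf'1 : ContDiffAt ℝ 1 (fderiv ℝ C.F) p :=
    hCtop.fderiv_right (WithTop.coe_le_coe.2 le_top)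
  have h'' : HasFDerivAt (fderiv ℝ C.F) (fderiv ℝ (fderiv ℝ C.F) p) p :=
    (hf'1.differentiableAt one_ne_zero).hasFDerivAt
  have hev : ∀ᶠ q in nhds p, HasFDerivAt C.F (fderiv ℝ C.F q) q := by
    filter_upwards [isOpen_interior.mem_nhds (mem_interior_sq ha hb)] with q hq
    have : sq ∈ nhds q :=
      mem_nhds_iff.2 ⟨interior sq, interior_subset, isOpen_interior, hq⟩
    exact ((C.smoothF.contDiffAt this).differentiableAt (by simp)).hasFDerivAt
  have hsymm := second_derivative_symmetric_of_eventually hev h''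
  -- derivative of s ↦ fderiv C.F (s, b) (0,1)
  have hlineA : HasDerivAt (fun s => ((s, b) : ℝ × ℝ)) (1, 0) a :=
    (hasDerivAt_id a).prodMk (hasDerivAt_const a b)
  have hA : HasDerivAt (fun s => fderiv ℝ C.F (s, b) (0, 1))
      (fderiv ℝ (fderiv ℝ C.F) p (1, 0) (0, 1)) a := by
    have h1 : HasDerivAt (fun s => fderiv ℝ C.F (s, b))
        (fderiv ℝ (fderiv ℝ C.F) p (1, 0)) a := h''.comp_hasDerivAt a hlineA
    exact (ContinuousLinearMap.apply ℝ ℝ ((0:ℝ), (1:ℝ))).hasFDerivAt.comp_hasDerivAt a h1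
  have hlineB : HasDerivAt (fun t => ((a, t) : ℝ × ℝ)) (0, 1) b :=
    (hasDerivAt_const b a).prodMk (hasDerivAt_id b)
  have hB : HasDerivAt (fun t => fderiv ℝ C.F (a, t) (1, 0))
      (fderiv ℝ (fderiv ℝ C.F) p (0, 1) (1, 0)) b := by
    have h1 : HasDerivAt (fun t => fderiv ℝ C.F (a, t))
        (fderiv ℝ (fderiv ℝ C.F) p (0, 1)) b := h''.comp_hasDerivAt b hlineB
    exact (ContinuousLinearMap.apply ℝ ℝ ((1:ℝ), (0:ℝ))).hasFDerivAt.comp_hasDerivAt b h1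
  -- h2 · b agrees with the fderiv expression near a
  have hevA : (fun s => C.h2 s b) =ᶠ[nhds a] (fun s => fderiv ℝ C.F (s, b) (0, 1)) := by
    filter_upwards [Ioo_mem_nhds ha.1 ha.2] with s hs
    exact C.h2_eq_fderiv hs hb
  have hevB : (fun t => C.h1 a t) =ᶠ[nhds b] (fun t => fderiv ℝ C.F (a, t) (1, 0)) := by
    filter_upwards [Ioo_mem_nhds hb.1 hb.2] with t ht
    exact C.h1_eq_fderiv ha ht
  have hB' : HasDerivAt (fun t => C.h1 a t) (fderiv ℝ (fderiv ℝ C.F) p (0, 1) (1, 0)) b :=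
    hB.congr_of_eventuallyEq hevB
  have hdens : C.density a b = fderiv ℝ (fderiv ℝ C.F) p (0, 1) (1, 0) := by
    have : C.density a b = deriv (fun t => C.h1 a t) b := rfl
    rw [this, hB'.deriv]
  constructor
  · rw [hdens, ← hsymm (0,1) (1,0)] at *
    exact hA.congr_of_eventuallyEq hevA
  · rw [hdens]; exact hB'


lemma h1_mem_Ioo {a b : ℝ} (ha : a ∈ Set.Ioo (0:ℝ) 1) (hb : b ∈ Set.Ioo (0:ℝ) 1) :
    C.h1 a b ∈ Set.Ioo (0:ℝ) 1 := by
  set ψ : ℝ → ℝ := fun t => C.H1 (a, t) with hψ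
  have hcont : ContinuousOn ψ (Set.Icc 0 1) := by
    apply C.continuousOn_H1.comp (by fun_prop)
    exact fun t ht => ⟨Set.mem_Icc.2 ⟨le_of_lt ha.1, le_of_lt ha.2⟩, ht⟩
  have hderiv : ∀ t ∈ Set.Ioo (0:ℝ) 1, HasDerivAt ψ (C.density a t) t := by
    intro t ht
    have hev : ψ =ᶠ[nhds t] (fun t' => C.h1 a t') := by
      filter_upwards [Ioo_mem_nhds ht.1 ht.2] with t' ht'
      exact C.H1_eq_h1 ha ht'
    exact ((C.mixed_partials ha ht).2).congr_of_eventuallyEq hev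
  have hmono : StrictMonoOn ψ (Set.Icc 0 1) := by
    apply strictMonoOn_of_deriv_pos (convex_Icc 0 1) hcont
    intro t ht
    rw [interior_Icc] at ht
    rw [(hderiv t ht).deriv]
    exact C.density_pos a ha t ht
  have h0 : ψ 0 = 0 := C.H1_bot (Set.mem_Icc.2 ⟨le_of_lt ha.1, le_of_lt ha.2⟩)
  have h1' : ψ 1 = 1 := C.H1_top (Set.mem_Icc.2 ⟨le_of_lt ha.1, le_of_lt ha.2⟩)
  have hbI : b ∈ Set.Icc (0:ℝ) 1 := ⟨le_of_lt hb.1, le_of_lt hb.2⟩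
  have hval : C.h1 a b = ψ b := (C.H1_eq_h1 ha hb).symm
  constructor
  · rw [hval, ← h0]
    exact hmono (Set.left_mem_Icc.2 zero_le_one) hbI hb.1
  · rw [hval, ← h1']
    exact hmono hbI (Set.right_mem_Icc.2 zero_le_one) hb.2

lemma h2_mem_Ioo {a b : ℝ} (ha : a ∈ Set.Ioo (0:ℝ) 1) (hb : b ∈ Set.Ioo (0:ℝ) 1) :
    C.h2 a b ∈ Set.Ioo (0:ℝ) 1 := by
  set φ : ℝ → ℝ := fun s => C.H2 (s, b) with hφ
  have hbI : b ∈ Set.Icc (0:ℝ) 1 := ⟨le_of_lt hb.1, le_of_lt hb.2⟩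
  have hcont : ContinuousOn φ (Set.Icc 0 1) := by
    apply C.continuousOn_H2.comp (by fun_prop)
    exact fun s hs => ⟨hs, hbI⟩
  have hderiv : ∀ s ∈ Set.Ioo (0:ℝ) 1, HasDerivAt φ (C.density s b) s := by
    intro s hs
    have hev : φ =ᶠ[nhds s] (fun s' => C.h2 s' b) := by
      filter_upwards [Ioo_mem_nhds hs.1 hs.2] with s' hs'
      exact C.H2_eq_h2 hs' hb
    exact ((C.mixed_partials hs hb).1).congr_of_eventuallyEq hev
  have hmono : StrictMonoOn φ (Set.Icc 0 1) := by
    apply strictMonoOn_of_deriv_pos (convex_Icc 0 1) hcont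
    intro s hs
    rw [interior_Icc] at hs
    rw [(hderiv s hs).deriv]
    exact C.density_pos s hs b hb
  have h0 : φ 0 = 0 := C.H2_left hbI
  have h1' : φ 1 = 1 := C.H2_right hbI
  have haI : a ∈ Set.Icc (0:ℝ) 1 := ⟨le_of_lt ha.1, le_of_lt ha.2⟩
  have hval : C.h2 a b = φ a := (C.H2_eq_h2 ha hb).symm
  constructor
  · rw [hval, ← h0]
    exact hmono (Set.left_mem_Icc.2 zero_le_one) haI ha.1
  · rw [hval, ← h1']
    exact hmono haI (Set.right_mem_Icc.2 zero_le_one) ha.2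

end SmoothBivCopula

open SmoothBivCopula

/-- The pair of forward and backward Rosenblatt functions `(R⁽¹⁾_k, R⁽²⁾_k)` built from
h-function sequences `h1 h2 : ℕ → ℝ → ℝ → ℝ` (index `k` corresponds to copula `C_k`). -/
def rosenblattPair (h1 h2 : ℕ → ℝ → ℝ → ℝ) :
    (k : ℕ) → ((Fin k → ℝ) → ℝ → ℝ) × ((Fin k → ℝ) → ℝ → ℝ)
  | 0 => (fun _ x => x, fun _ x => x)
  | k + 1 =>
    let P := rosenblattPair h1 h2 k
    (fun u x => h1 (k + 1) (P.2 (Fin.tail u) (u 0)) (P.1 (Fin.tail u) x),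
     fun u x => h2 (k + 1) (P.2 (Fin.init u) x) (P.1 (Fin.init u) (u (Fin.last k))))

/-- Forward Rosenblatt function `R⁽¹⁾_k` of the copula sequence `C`. -/
def R1 (C : ℕ → SmoothBivCopula) (k : ℕ) : (Fin k → ℝ) → ℝ → ℝ :=
  (rosenblattPair (fun j => (C j).h1) (fun j => (C j).h2) k).1

/-- Backward Rosenblatt function `R⁽²⁾_k` of the copula sequence `C`. -/
def R2 (C : ℕ → SmoothBivCopula) (k : ℕ) : (Fin k → ℝ) → ℝ → ℝ :=
  (rosenblattPair (fun j => (C j).h1) (fun j => (C j).h2) k).2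

/-- `get u m` is the `(m+1)`-st (i.e. 0-indexed `m`-th) entry of `u`, with junk value `0`
out of range. -/
def get {n : ℕ} (u : Fin n → ℝ) (m : ℕ) : ℝ := if h : m < n then u ⟨m, h⟩ else 0

/-- `seg u a len` is the length-`len` slice of `u` starting at 0-indexed position `a`. -/
def seg {n : ℕ} (u : Fin n → ℝ) (a len : ℕ) : Fin len → ℝ := fun i => get u (a + i)

/-- The s-vine density of order `n`:
`c_(n)(u₁,…,uₙ) = ∏_{k=1}^{n-1} ∏_{j=k+1}^{n} c_k(R⁽²⁾_{k-1}(u_{[j-k+1,j-1]}, u_{j-k}), R⁽¹⁾_{k-1}(u_{[j-k+1,j-1]}, u_j))`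
(1-indexed). -/
def svineDensity (C : ℕ → SmoothBivCopula) (n : ℕ) (u : Fin n → ℝ) : ℝ :=
  ∏ k ∈ Finset.Icc 1 (n - 1), ∏ j ∈ Finset.Icc (k + 1) n,
    (C k).density (R2 C (k - 1) (seg u (j - k) (k - 1)) (get u (j - k - 1)))
                  (R1 C (k - 1) (seg u (j - k) (k - 1)) (get u (j - 1)))

/-- The forward Rosenblatt density
`f_k(u,x) = ∏_{j=1}^{k} c_j(R⁽²⁾_{j-1}(u_{[k-j+2,k]}, u_{k-j+1}), R⁽¹⁾_{j-1}(u_{[k-j+2,k]}, x))`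
(1-indexed). -/
def fden (C : ℕ → SmoothBivCopula) (k : ℕ) (u : Fin k → ℝ) (x : ℝ) : ℝ :=
  ∏ j ∈ Finset.Icc 1 k,
    (C j).density (R2 C (j - 1) (seg u (k - j + 1) (j - 1)) (get u (k - j)))
                  (R1 C (j - 1) (seg u (k - j + 1) (j - 1)) x)

lemma R1_succ (C : ℕ → SmoothBivCopula) (k : ℕ) (u : Fin (k+1) → ℝ) (x : ℝ) :
    R1 C (k+1) u x
      = (C (k+1)).h1 (R2 C k (Fin.tail u) (u 0)) (R1 C k (Fin.tail u) x) := rfl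

lemma R2_succ (C : ℕ → SmoothBivCopula) (k : ℕ) (u : Fin (k+1) → ℝ) (x : ℝ) :
    R2 C (k+1) u x
      = (C (k+1)).h2 (R2 C k (Fin.init u) x) (R1 C k (Fin.init u) (u (Fin.last k))) := rfl

lemma R_mem_Ioo (C : ℕ → SmoothBivCopula) :
    ∀ k (u : Fin k → ℝ), (∀ i, u i ∈ Set.Ioo (0:ℝ) 1) → ∀ x ∈ Set.Ioo (0:ℝ) 1,
      R1 C k u x ∈ Set.Ioo (0:ℝ) 1 ∧ R2 C k u x ∈ Set.Ioo (0:ℝ) 1 := by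
  intro k
  induction k with
  | zero => intro u hu x hx; exact ⟨hx, hx⟩
  | succ k ih =>
    intro u hu x hx
    have htail : ∀ i, Fin.tail u i ∈ Set.Ioo (0:ℝ) 1 := fun i => hu i.succ
    have hinit : ∀ i, Fin.init u i ∈ Set.Ioo (0:ℝ) 1 := fun i => hu i.castSucc
    constructor
    · rw [R1_succ]
      exact (C (k+1)).h1_mem_Ioo (ih (Fin.tail u) htail (u 0) (hu 0)).2
        (ih (Fin.tail u) htail x hx).1
    · rw [R2_succ]
      exact (C (k+1)).h2_mem_Ioo (ih (Fin.init u) hinit x hx).2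
        (ih (Fin.init u) hinit (u (Fin.last k)) (hu (Fin.last k))).1

/-- continuous extension in the last variable of `R2` -/
def Gx (C : ℕ → SmoothBivCopula) : (k : ℕ) → (Fin k → ℝ) → ℝ → ℝ
  | 0 => fun _ x => x
  | k+1 => fun u x =>
      (C (k+1)).H2 (Gx C k (Fin.init u) x, R1 C k (Fin.init u) (u (Fin.last k)))

lemma Gx_spec (C : ℕ → SmoothBivCopula) :
    ∀ k (u : Fin k → ℝ), (∀ i, u i ∈ Set.Ioo (0:ℝ) 1) →
      (∀ x ∈ Set.Icc (0:ℝ) 1, Gx C k u x ∈ Set.Icc (0:ℝ) 1) ∧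
      ContinuousOn (Gx C k u) (Set.Icc 0 1) ∧
      (∀ x ∈ Set.Ioo (0:ℝ) 1, Gx C k u x = R2 C k u x) ∧
      Gx C k u 0 = 0 ∧ Gx C k u 1 = 1 := by
  intro k
  induction k with
  | zero =>
    intro u hu
    exact ⟨fun x hx => hx, continuousOn_id, fun x hx => rfl, rfl, rfl⟩
  | succ k ih =>
    intro u hu
    have hinit : ∀ i, Fin.init u i ∈ Set.Ioo (0:ℝ) 1 := fun i => hu i.castSucc
    obtain ⟨hIcc, hcont, hIoo, h0, h1⟩ := ih (Fin.init u) hinit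
    have hb : R1 C k (Fin.init u) (u (Fin.last k)) ∈ Set.Ioo (0:ℝ) 1 :=
      (R_mem_Ioo C k (Fin.init u) hinit (u (Fin.last k)) (hu (Fin.last k))).1
    have hbI : R1 C k (Fin.init u) (u (Fin.last k)) ∈ Set.Icc (0:ℝ) 1 :=
      ⟨le_of_lt hb.1, le_of_lt hb.2⟩
    have hioo : ∀ x ∈ Set.Ioo (0:ℝ) 1, Gx C (k+1) u x = R2 C (k+1) u x := by
      intro x hx
      have hR2 : R2 C k (Fin.init u) x ∈ Set.Ioo (0:ℝ) 1 :=
        (R_mem_Ioo C k (Fin.init u) hinit x hx).2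
      show (C (k+1)).H2 (Gx C k (Fin.init u) x, _) = _
      rw [hIoo x hx, (C (k+1)).H2_eq_h2 hR2 hb, R2_succ]
    have hzero : Gx C (k+1) u 0 = 0 := by
      show (C (k+1)).H2 (Gx C k (Fin.init u) 0, _) = 0
      rw [h0]; exact (C (k+1)).H2_left hbI
    have hone : Gx C (k+1) u 1 = 1 := by
      show (C (k+1)).H2 (Gx C k (Fin.init u) 1, _) = 1
      rw [h1]; exact (C (k+1)).H2_right hbI
    refine ⟨?_, ?_, hioo, hzero, hone⟩
    · intro x hx
      rcases eq_or_lt_of_le hx.1 with h | hlt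
      · rw [← h, hzero]; exact Set.left_mem_Icc.2 zero_le_one
      rcases eq_or_lt_of_le hx.2 with h | hlt2
      · rw [h, hone]; exact Set.right_mem_Icc.2 zero_le_one
      · rw [hioo x ⟨hlt, hlt2⟩]
        have := (R_mem_Ioo C (k+1) u hu x ⟨hlt, hlt2⟩).2
        exact ⟨le_of_lt this.1, le_of_lt this.2⟩
    · show ContinuousOn (fun x => (C (k+1)).H2 (Gx C k (Fin.init u) x, _)) _
      apply (C (k+1)).continuousOn_H2.comp (hcont.prodMk continuousOn_const)
      exact fun x hx => ⟨hIcc x hx, hbI⟩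

lemma get_cons {n : ℕ} (x : ℝ) (u : Fin n → ℝ) (m : ℕ) :
    get (Fin.cons x u : Fin (n+1) → ℝ) (m + 1) = get u m := by
  unfold _root_.get
  by_cases h : m < n
  · rw [dif_pos h, dif_pos (Nat.succ_lt_succ h)]
    exact Fin.cons_succ (α := fun _ => ℝ) x u ⟨m, h⟩
  · rw [dif_neg h, dif_neg (fun hh => h (Nat.lt_of_succ_lt_succ hh))]

lemma get_cons_zero {n : ℕ} (x : ℝ) (u : Fin n → ℝ) :
    get (Fin.cons x u : Fin (n+1) → ℝ) 0 = x := by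
  unfold _root_.get
  rw [dif_pos (Nat.succ_pos n)]
  exact Fin.cons_zero (α := fun _ => ℝ) x u

lemma seg_cons {n : ℕ} (x : ℝ) (u : Fin n → ℝ) (a len : ℕ) :
    seg (Fin.cons x u : Fin (n+1) → ℝ) (a + 1) len = seg u a len := by
  funext i
  show get (Fin.cons x u : Fin (n+1) → ℝ) (a + 1 + i) = get u (a + i)
  rw [show a + 1 + (i:ℕ) = (a + i) + 1 by omega, get_cons]

lemma seg_mem {n : ℕ} {u : Fin n → ℝ} (hu : ∀ i, u i ∈ Set.Ioo (0:ℝ) 1)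
    {a len : ℕ} (h : a + len ≤ n) : ∀ i, seg u a len i ∈ Set.Ioo (0:ℝ) 1 := by
  intro i
  have hlt : a + (i:ℕ) < n := by omega
  show get u (a + i) ∈ _
  unfold _root_.get
  rw [dif_pos hlt]
  exact hu _

lemma init_seg {n : ℕ} (u : Fin n → ℝ) (k : ℕ) :
    Fin.init (seg u 0 (k+1)) = seg u 0 k := by
  funext i
  show get u (0 + (i:ℕ)) = get u (0 + (i:ℕ))
  rfl

lemma seg_last {n : ℕ} (u : Fin n → ℝ) (k : ℕ) :
    seg u 0 (k+1) (Fin.last k) = get u k := by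
  show get u (0 + k) = get u k
  rw [Nat.zero_add]

/-- the factor appearing in the derivative of `x ↦ R2ₖ` -/
def Dterm (C : ℕ → SmoothBivCopula) {n : ℕ} (u : Fin n → ℝ) (j : ℕ) (x : ℝ) : ℝ :=
  (C j).density (R2 C (j-1) (seg u 0 (j-1)) x) (R1 C (j-1) (seg u 0 (j-1)) (get u (j-1)))

lemma hasDerivAt_R2 (C : ℕ → SmoothBivCopula) {n : ℕ} (u : Fin n → ℝ)
    (hu : ∀ i, u i ∈ Set.Ioo (0:ℝ) 1) :
    ∀ k, k ≤ n → ∀ x ∈ Set.Ioo (0:ℝ) 1,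
      HasDerivAt (fun y => R2 C k (seg u 0 k) y)
        (∏ j ∈ Finset.Icc 1 k, Dterm C u j x) x := by
  intro k
  induction k with
  | zero =>
    intro _ x hx
    show HasDerivAt (fun y => y) _ x
    simpa using (hasDerivAt_id' x)
  | succ k ih =>
    intro hk x hx
    have hk' : k ≤ n := Nat.le_of_succ_le hk
    have hseg : ∀ i, seg u 0 k i ∈ Set.Ioo (0:ℝ) 1 := seg_mem hu (by omega)
    have hsegk1 : ∀ i, seg u 0 (k+1) i ∈ Set.Ioo (0:ℝ) 1 := seg_mem hu (by omega)
    have hgetk : get u k ∈ Set.Ioo (0:ℝ) 1 := by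
      unfold _root_.get; rw [dif_pos (by omega : k < n)]; exact hu _
    have hA : R2 C k (seg u 0 k) x ∈ Set.Ioo (0:ℝ) 1 :=
      (R_mem_Ioo C k (seg u 0 k) hseg x hx).2
    have hb : R1 C k (seg u 0 k) (get u k) ∈ Set.Ioo (0:ℝ) 1 :=
      (R_mem_Ioo C k (seg u 0 k) hseg (get u k) hgetk).1
    have hrw : (fun y => R2 C (k+1) (seg u 0 (k+1)) y)
        = fun y => (C (k+1)).h2 (R2 C k (seg u 0 k) y) (R1 C k (seg u 0 k) (get u k)) := by
      funext y
      rw [R2_succ, init_seg, seg_last]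
    rw [hrw]
    have houter : HasDerivAt (fun a => (C (k+1)).h2 a (R1 C k (seg u 0 k) (get u k)))
        ((C (k+1)).density (R2 C k (seg u 0 k) x) (R1 C k (seg u 0 k) (get u k)))
        (R2 C k (seg u 0 k) x) := ((C (k+1)).mixed_partials hA hb).1
    have hcomp := houter.comp x (ih hk' x hx)
    have : Dterm C u (k+1) x
        = (C (k+1)).density (R2 C k (seg u 0 k) x) (R1 C k (seg u 0 k) (get u k)) := by
      unfold Dterm
      simp
    rw [Finset.prod_Icc_succ_top (by omega : 1 ≤ k + 1), this, mul_comm]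
    exact hcomp

lemma integral_Dprod (C : ℕ → SmoothBivCopula) {n : ℕ} (u : Fin n → ℝ)
    (hu : ∀ i, u i ∈ Set.Ioo (0:ℝ) 1) :
    ∫ x in (0:ℝ)..1, (∏ j ∈ Finset.Icc 1 n, Dterm C u j x) = 1 := by
  have hv : ∀ i, seg u 0 n i ∈ Set.Ioo (0:ℝ) 1 := seg_mem hu (by omega)
  obtain ⟨hIcc, hcont, hIoo, h0, h1⟩ := Gx_spec C n (seg u 0 n) hv
  have hderiv : ∀ x ∈ Set.Ioo (0:ℝ) 1, HasDerivAt (Gx C n (seg u 0 n))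
      (∏ j ∈ Finset.Icc 1 n, Dterm C u j x) x := by
    intro x hx
    refine (hasDerivAt_R2 C u hu n le_rfl x hx).congr_of_eventuallyEq ?_
    filter_upwards [Ioo_mem_nhds hx.1 hx.2] with y hy
    exact hIoo y hy
  have hpos : ∀ x ∈ Set.Ioo (0:ℝ) 1, 0 ≤ ∏ j ∈ Finset.Icc 1 n, Dterm C u j x := by
    intro x hx
    refine Finset.prod_nonneg fun j hj => le_of_lt ?_
    obtain ⟨hj1, hjn⟩ := Finset.mem_Icc.1 hj
    have hseg : ∀ i, seg u 0 (j-1) i ∈ Set.Ioo (0:ℝ) 1 := seg_mem hu (by omega)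
    have hget : get u (j-1) ∈ Set.Ioo (0:ℝ) 1 := by
      unfold _root_.get; rw [dif_pos (by omega : j - 1 < n)]; exact hu _
    exact (C j).density_pos _ ((R_mem_Ioo C (j-1) _ hseg x hx).2)
      _ ((R_mem_Ioo C (j-1) _ hseg _ hget).1)
  have hint : IntervalIntegrable (fun x => ∏ j ∈ Finset.Icc 1 n, Dterm C u j x)
      volume 0 1 := by
    rw [intervalIntegrable_iff_integrableOn_Ioc_of_le zero_le_one]
    exact intervalIntegral.integrableOn_deriv_of_nonneg hcont hderiv hpos
  rw [intervalIntegral.integral_eq_sub_of_hasDerivAt_of_le zero_le_one hcont hderiv hint,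
    h1, h0, sub_zero]

lemma svine_factor (C : ℕ → SmoothBivCopula) {n : ℕ} (hn : 1 ≤ n) (u : Fin n → ℝ) (x : ℝ) :
    svineDensity C (n+1) (Fin.cons x u)
      = (∏ j ∈ Finset.Icc 1 n, Dterm C u j x) * svineDensity C n u := by
  unfold svineDensity
  rw [show n + 1 - 1 = n from rfl]
  have hinner : ∀ k ∈ Finset.Icc 1 n,
      (∏ j ∈ Finset.Icc (k + 1) (n+1),
        (C k).density
          (R2 C (k - 1) (seg (Fin.cons x u : Fin (n+1) → ℝ) (j - k) (k - 1))
            (get (Fin.cons x u : Fin (n+1) → ℝ) (j - k - 1)))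
          (R1 C (k - 1) (seg (Fin.cons x u : Fin (n+1) → ℝ) (j - k) (k - 1))
            (get (Fin.cons x u : Fin (n+1) → ℝ) (j - 1))))
      = Dterm C u k x *
        ∏ j ∈ Finset.Icc (k + 1) n,
        (C k).density (R2 C (k - 1) (seg u (j - k) (k - 1)) (get u (j - k - 1)))
                      (R1 C (k - 1) (seg u (j - k) (k - 1)) (get u (j - 1))) := by
    intro k hk
    obtain ⟨hk1, hkn⟩ := Finset.mem_Icc.1 hk
    rw [← Finset.Ico_add_one_right_eq_Icc, ← Finset.Ico_add_one_right_eq_Icc,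
      Finset.prod_eq_prod_Ico_succ_bot (by omega : k + 1 < n + 1 + 1)]
    congr 1
    · have e1 : k + 1 - k = 1 := by omega
      have e2 : k + 1 - k - 1 = 0 := by omega
      have e3 : k + 1 - 1 = k := by omega
      rw [e2, e1, e3]
      have hs : seg (Fin.cons x u : Fin (n+1) → ℝ) 1 (k-1) = seg u 0 (k-1) :=
        seg_cons x u 0 (k-1)
      rw [hs, get_cons_zero, show k = (k-1)+1 by omega, get_cons]
      rfl
    · rw [Finset.prod_Ico_eq_prod_range, Finset.prod_Ico_eq_prod_range]
      rw [show n + 1 + 1 - (k + 1 + 1) = n + 1 - (k + 1) by omega]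
      refine Finset.prod_congr rfl fun i _ => ?_
      have e1 : k + 1 + 1 + i - k = i + 2 := by omega
      have e2 : k + 1 + 1 + i - k - 1 = i + 1 := by omega
      have e3 : k + 1 + 1 + i - 1 = (k + i) + 1 := by omega
      have f1 : k + 1 + i - k = i + 1 := by omega
      have f2 : k + 1 + i - k - 1 = i := by omega
      have f3 : k + 1 + i - 1 = k + i := by omega
      rw [e2, e1, e3, f2, f1, f3, show i + 2 = (i+1)+1 from rfl, seg_cons,
        get_cons, get_cons]
  rw [Finset.prod_congr rfl hinner, Finset.prod_mul_distrib]
  congr 1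
  symm
  apply Finset.prod_subset
  · exact Finset.Icc_subset_Icc_right (by omega)
  · intro k hk hk'
    have hkn : k = n := by
      simp only [Finset.mem_Icc] at hk hk'; omega
    subst hkn
    rw [Finset.Icc_eq_empty (by omega), Finset.prod_empty]

/-- integrating out the first argument of the s-vine density of order `n+1`
recovers the s-vine density of order `n`:
`∫_0^1 c_(n+1)(x,u₁,…,uₙ) dx = c_(n)(u₁,…,uₙ)` (with `c_(1) ≡ 1` by definition); in
particular the first marginal of the s-vine density of order `n+1` is the s-vine density
of order `n`. -/
theorem svine_density_integrate_first
    (C : ℕ → SmoothBivCopula) :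
    ∀ n, 1 ≤ n → ∀ u : Fin n → ℝ, (∀ i, u i ∈ Set.Ioo (0:ℝ) 1) →
      ∫ x in (0:ℝ)..1, svineDensity C (n + 1) (Fin.cons x u) = svineDensity C n u := by
  intro n hn u hu
  have hfac : ∀ x : ℝ, svineDensity C (n+1) (Fin.cons x u)
      = (∏ j ∈ Finset.Icc 1 n, Dterm C u j x) * svineDensity C n u :=
    fun x => svine_factor C hn u x
  simp only [hfac]
  rw [intervalIntegral.integral_mul_const, integral_Dprod C u hu, one_mul]

end
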